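/- arXiv:math/0605422 — 2 statements merged into one kernel-verified Lean document; each statement's English description precedes it below -/
import Mathlib

section
/- Let d ≥ 2, let D ⊂ ℝ^d be a bounded open set, and let 0 < γ < α < min(β, d) with α ∈ (0,2). Then sup over x, w ∈ D of the double integral ∫_D ∫_D max(min(|x-w|, |y-z|)/|x-y|, 1)^γ · max(min(|x-w|, |y-z|)/|z-w|, 1)^γ · (|x-w|^{d-α}/(|x-y|^{d-α}·|z-w|^{d-α})) · |y-z|^{β-d-α} dy dz is finite. -/
/-!
Bounding `max (t / ρ) 1 ^ γ ≤ 1 + (|y - z| / ρ) ^ γ` in both factors dominates the integrand by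
four chain kernels `|x - w| ^ c |x - y| ^ (-p) |y - z| ^ e |z - w| ^ (-q)` with `c = d - α` and
`p, q ∈ {c, c + γ}`. Such a kernel is integrated out with the composition estimate
`∫_D |a - z| ^ (-q) |z - b| ^ (-r) dz ≤ C |a - b| ^ (-σ)` (for `0 ≤ σ ≤ q, r` and `σ > q + r - d`),
first in `z` and then in `y`. The exponents can be chosen so that the final `σ` is at most `c`,
and then the factor `|x - w| ^ c` absorbs the remaining singularity.
-/

open MeasureTheory Metric
open scoped ENNReal

namespace ENNReal

lemma rpow_add_of_nonpos (x : ℝ≥0∞) {y z : ℝ} (hy : y ≤ 0) (hz : z ≤ 0) :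
    x ^ (y + z) = x ^ y * x ^ z := by
  rcases hy.lt_or_eq with hy | rfl
  swap; · simp
  rcases hz.lt_or_eq with hz | rfl
  swap; · simp
  rcases eq_or_ne x 0 with rfl | h0
  · simp [zero_rpow_of_neg, hy, hz, add_neg hy hz]
  rcases eq_or_ne x ⊤ with rfl | htop
  · simp [top_rpow_of_neg, hy, hz, add_neg hy hz]
  exact rpow_add _ _ h0 htop

lemma rpow_mul_rpow_le_rpow_add {x : ℝ≥0∞} (hx : x ≠ ⊤) {y : ℝ} (hy : 0 ≤ y) (z : ℝ) :
    x ^ y * x ^ z ≤ x ^ (y + z) := by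
  rcases eq_or_ne x 0 with rfl | h0
  · rcases hy.eq_or_lt with rfl | hy
    · simp
    · simp [zero_rpow_of_pos hy]
  · exact (rpow_add _ _ h0 hx).ge

lemma rpow_le_rpow_of_nonpos {x y : ℝ≥0∞} {z : ℝ} (hxy : x ≤ y) (hz : z ≤ 0) :
    y ^ z ≤ x ^ z := by
  simpa only [← rpow_neg, neg_neg] using
    ENNReal.inv_le_inv.2 (rpow_le_rpow hxy (neg_nonneg.2 hz))

lemma rpow_le_rpow_posPart_mul_rpow_neg_negPart {x K : ℝ≥0∞} (hxK : x ≤ K) (e : ℝ) :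
    x ^ e ≤ K ^ e⁺ * x ^ (-e⁻) := by
  rcases le_total 0 e with he | he
  · rw [posPart_eq_self.2 he, negPart_of_nonneg he, neg_zero, rpow_zero, mul_one]
    exact rpow_le_rpow hxK he
  · rw [posPart_eq_zero.2 he, negPart_of_nonpos he, neg_neg, rpow_zero, one_mul]

lemma ofReal_rpow_le {x : ℝ} (hx : 0 ≤ x) (e : ℝ) :
    ENNReal.ofReal (x ^ e) ≤ ENNReal.ofReal x ^ e := by
  rcases hx.eq_or_lt with rfl | hx
  · rcases eq_or_ne e 0 with rfl | he
    · simp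
    · simp [Real.zero_rpow he]
  · exact (ofReal_rpow_of_pos hx).ge

lemma ofReal_max_div_one_rpow_le {m s r γ : ℝ} (hms : m ≤ s) (hr : 0 ≤ r) (hγ : 0 ≤ γ) :
    ENNReal.ofReal (max (m / r) 1 ^ γ) ≤ 1 + ENNReal.ofReal s ^ γ * ENNReal.ofReal r ^ (-γ) :=
  calc ENNReal.ofReal (max (m / r) 1 ^ γ) = max (ENNReal.ofReal (m / r) ^ γ) 1 := by
        rw [← ofReal_rpow_of_nonneg (by positivity) hγ, ofReal_max, ofReal_one, max_rpow hγ,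
          one_rpow]
    _ ≤ ENNReal.ofReal (m / r) ^ γ + 1 := max_le le_self_add le_add_self
    _ ≤ (ENNReal.ofReal s / ENNReal.ofReal r) ^ γ + 1 := by
        gcongr
        exact (ofReal_div_le hr).trans (by gcongr)
    _ = 1 + ENNReal.ofReal s ^ γ * ENNReal.ofReal r ^ (-γ) := by
        rw [div_rpow_of_nonneg _ _ hγ, div_eq_mul_inv, ← rpow_neg, add_comm]

end ENNReal

section PseudoMetricSpace

open ENNReal

variable {X : Type*} [PseudoMetricSpace X] {q r σ : ℝ}

lemma edist_rpow_neg_mul_le_of_le {a b z : X} (h : edist a z ≤ edist b z) (hσ : 0 ≤ σ)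
    (hσr : σ ≤ r) (hq : 0 ≤ q) :
    edist a z ^ (-q) * edist b z ^ (-r) ≤
      2 ^ σ * edist a b ^ (-σ) * edist a z ^ (-(q + r - σ)) := by
  have hab : edist a b ≤ 2 * edist b z :=
    calc edist a b ≤ edist a z + edist z b := edist_triangle _ _ _
      _ ≤ edist b z + edist b z := by rw [edist_comm z b]; gcongr
      _ = 2 * edist b z := (two_mul _).symm
  have hbz : edist b z ^ (-σ) ≤ 2 ^ σ * edist a b ^ (-σ) :=
    calc edist b z ^ (-σ) = 2 ^ σ * (2 * edist b z) ^ (-σ) := by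
          rw [mul_rpow_of_ne_top ofNat_ne_top (edist_ne_top _ _), ← mul_assoc,
            ← rpow_add _ _ two_ne_zero ofNat_ne_top, add_neg_cancel, rpow_zero, one_mul]
      _ ≤ 2 ^ σ * edist a b ^ (-σ) :=
          mul_le_mul_right (rpow_le_rpow_of_nonpos hab (by linarith)) _
  calc edist a z ^ (-q) * edist b z ^ (-r)
      = edist a z ^ (-q) * edist b z ^ (-(r - σ)) * edist b z ^ (-σ) := by
        rw [mul_assoc, ← rpow_add_of_nonpos _ (by linarith) (by linarith)]
        ring_nf
    _ ≤ edist a z ^ (-q) * edist a z ^ (-(r - σ)) * (2 ^ σ * edist a b ^ (-σ)) :=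
        mul_le_mul' (mul_le_mul_right (rpow_le_rpow_of_nonpos h (by linarith)) _) hbz
    _ = 2 ^ σ * edist a b ^ (-σ) * edist a z ^ (-(q + r - σ)) := by
        rw [← rpow_add_of_nonpos _ (by linarith) (by linarith), mul_comm]
        ring_nf

lemma edist_rpow_neg_mul_le (a b z : X) (hσ : 0 ≤ σ) (hσq : σ ≤ q) (hσr : σ ≤ r) :
    edist a z ^ (-q) * edist b z ^ (-r) ≤
      2 ^ σ * edist a b ^ (-σ) * (edist a z ^ (-(q + r - σ)) + edist b z ^ (-(q + r - σ))) := by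
  rcases le_total (edist a z) (edist b z) with h | h
  · exact (edist_rpow_neg_mul_le_of_le h hσ hσr (by linarith)).trans (by gcongr; exact le_self_add)
  · have := edist_rpow_neg_mul_le_of_le h hσ hσq (by linarith : 0 ≤ r)
    rw [mul_comm, edist_comm b a, add_comm r q] at this
    exact this.trans (by gcongr; exact le_add_self)

-- In `ℝ≥0∞` a negative power of `0` is `⊤`, so this dominates its real counterpart, whose
-- junk value at coincident points is `0`.
noncomputable def chainKernel (c p e q : ℝ) (x w y z : X) : ℝ≥0∞ :=
  edist x w ^ c * edist x y ^ (-p) * (edist y z ^ e * edist z w ^ (-q))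

lemma ofReal_max_div_dist_rpow_mul_dist_rpow_neg_le {x y : X} {m s c γ : ℝ} (hms : m ≤ s)
    (hc : 0 ≤ c) (hγ : 0 ≤ γ) :
    ENNReal.ofReal (max (m / dist x y) 1 ^ γ * dist x y ^ (-c)) ≤
      edist x y ^ (-c) + ENNReal.ofReal s ^ γ * edist x y ^ (-(c + γ)) := by
  rw [ofReal_mul (by positivity), edist_dist]
  calc _ ≤ (1 + ENNReal.ofReal s ^ γ * ENNReal.ofReal (dist x y) ^ (-γ)) *
        ENNReal.ofReal (dist x y) ^ (-c) :=
      mul_le_mul' (ofReal_max_div_one_rpow_le hms dist_nonneg hγ) (ofReal_rpow_le dist_nonneg _)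
    _ = _ := by rw [neg_add, rpow_add_of_nonpos _ (by linarith) (by linarith)]; ring

lemma ofReal_kernel_le_sum_chainKernel (x w y z : X) {c γ e : ℝ} (hc : 0 ≤ c) (hγ : 0 ≤ γ) :
    ENNReal.ofReal (max (min (dist x w) (dist y z) / dist x y) 1 ^ γ *
        max (min (dist x w) (dist y z) / dist z w) 1 ^ γ *
        (dist x w ^ c / (dist x y ^ c * dist z w ^ c)) * dist y z ^ e) ≤
      chainKernel c c e c x w y z + chainKernel c (c + γ) (e + γ) c x w y z +
        chainKernel c c (e + γ) (c + γ) x w y z +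
        chainKernel c (c + γ) (e + 2 * γ) (c + γ) x w y z := by
  set m := min (dist x w) (dist y z)
  have hm : m ≤ dist y z := min_le_right _ _
  have hreal : max (m / dist x y) 1 ^ γ * max (m / dist z w) 1 ^ γ *
        (dist x w ^ c / (dist x y ^ c * dist z w ^ c)) * dist y z ^ e =
      max (m / dist x y) 1 ^ γ * dist x y ^ (-c) * (max (m / dist z w) 1 ^ γ * dist z w ^ (-c)) *
        dist x w ^ c * dist y z ^ e := by
    rw [Real.rpow_neg dist_nonneg, Real.rpow_neg dist_nonneg]; ring
  have hS : edist y z ^ γ * edist y z ^ e ≤ edist y z ^ (e + γ) :=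
    add_comm e γ ▸ rpow_mul_rpow_le_rpow_add (edist_ne_top _ _) hγ e
  have hSS : edist y z ^ γ * (edist y z ^ γ * edist y z ^ e) ≤ edist y z ^ (e + 2 * γ) :=
    (mul_le_mul_right hS _).trans <| (rpow_mul_rpow_le_rpow_add (edist_ne_top _ _) hγ _).trans_eq
      (by ring_nf)
  rw [hreal, ofReal_mul (by positivity), ofReal_mul (by positivity), ofReal_mul (by positivity)]
  calc _ ≤ (edist x y ^ (-c) + edist y z ^ γ * edist x y ^ (-(c + γ))) *
        (edist z w ^ (-c) + edist y z ^ γ * edist z w ^ (-(c + γ))) * edist x w ^ c *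
          edist y z ^ e := by
        rw [edist_dist x w, edist_dist y z]
        gcongr
        · exact ofReal_max_div_dist_rpow_mul_dist_rpow_neg_le hm hc hγ
        · exact ofReal_max_div_dist_rpow_mul_dist_rpow_neg_le hm hc hγ
        · exact ofReal_rpow_le dist_nonneg _
        · exact ofReal_rpow_le dist_nonneg _
    _ = chainKernel c c e c x w y z +
        edist x w ^ c * edist x y ^ (-(c + γ)) *
          (edist y z ^ γ * edist y z ^ e * edist z w ^ (-c)) +
        edist x w ^ c * edist x y ^ (-c) *
          (edist y z ^ γ * edist y z ^ e * edist z w ^ (-(c + γ))) +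
        edist x w ^ c * edist x y ^ (-(c + γ)) *
          (edist y z ^ γ * (edist y z ^ γ * edist y z ^ e) * edist z w ^ (-(c + γ))) := by
        unfold chainKernel; ring
    _ ≤ _ := by unfold chainKernel; gcongr

end PseudoMetricSpace

lemma lintegral_lintegral_add_left {α β : Type*} [MeasurableSpace α] [MeasurableSpace β]
    {μ : Measure α} {ν : Measure β} [SFinite ν] {f g : α → β → ℝ≥0∞}
    (hf : Measurable (Function.uncurry f)) :
    ∫⁻ a, ∫⁻ b, f a b + g a b ∂ν ∂μ = ∫⁻ a, ∫⁻ b, f a b ∂ν ∂μ + ∫⁻ a, ∫⁻ b, g a b ∂ν ∂μ := by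
  have hf' : Measurable fun a ↦ ∫⁻ b, f a b ∂ν := hf.lintegral_prod_right'
  rw [← lintegral_add_left hf']
  exact lintegral_congr fun a ↦ lintegral_add_left (hf.comp measurable_prodMk_left) _

section FiniteDimensional

variable {E : Type*} [NormedAddCommGroup E] [NormedSpace ℝ E] [FiniteDimensional ℝ E]
  [MeasurableSpace E] [BorelSpace E] (μ : Measure E) [μ.IsAddHaarMeasure]

@[fun_prop]
lemma measurable_chainKernel (c p e q : ℝ) (x w : E) :
    Measurable (Function.uncurry (chainKernel c p e q x w)) := by
  unfold chainKernel; fun_prop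

lemma lintegral_closedBall_enorm_rpow_neg_lt_top [Nontrivial E] {p : ℝ}
    (hp : p < Module.finrank ℝ E) (R : ℝ) :
    ∫⁻ z in closedBall (0 : E) R, ‖z‖ₑ ^ (-p) ∂μ < ⊤ := by
  have hint : IntegrableOn (fun z : E ↦ ‖z‖ ^ (-p)) (closedBall 0 R) μ := by
    refine (locallyIntegrable_of_norm_le_rpow (C := 1) Module.finrank_pos hp
      (ae_of_all _ fun z ↦ ?_) (measurable_norm.pow_const _).aestronglyMeasurable
      ).integrableOn_isCompact (isCompact_closedBall 0 R)
    rw [one_mul, Real.norm_of_nonneg (by positivity)]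
  refine lt_of_eq_of_lt (lintegral_congr_ae ?_) hint.2
  filter_upwards [ae_restrict_of_ae <|
    measure_eq_zero_iff_ae_notMem.1 (measure_singleton (μ := μ) 0)] with z hz
  rw [Real.enorm_of_nonneg (by positivity), ← ENNReal.ofReal_rpow_of_pos, ofReal_norm]
  exact norm_pos_iff.2 hz

lemma Bornology.IsBounded.exists_setLIntegral_edist_rpow_neg_le [Nontrivial E] {D : Set E}
    (hD : Bornology.IsBounded D) {p : ℝ} (hp : p < Module.finrank ℝ E) :
    ∃ C : ℝ≥0∞, C ≠ ⊤ ∧ ∀ a ∈ D, ∫⁻ z in D, edist a z ^ (-p) ∂μ ≤ C := by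
  obtain ⟨R, hR⟩ := Metric.isBounded_iff.1 hD
  set G := (closedBall (0 : E) R).indicator fun v ↦ ‖v‖ₑ ^ (-p)
  refine ⟨_, (lintegral_closedBall_enorm_rpow_neg_lt_top μ hp R).ne, fun a ha ↦ ?_⟩
  have hG : Measurable G :=
    ((measurable_enorm.pow_const _).indicator measurableSet_closedBall)
  calc ∫⁻ z in D, edist a z ^ (-p) ∂μ ≤ ∫⁻ z in D, G (z - a) ∂μ := by
        refine setLIntegral_mono (hG.comp (measurable_sub_const a)) fun z hz ↦ ?_
        have hza : z - a ∈ closedBall 0 R := by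
          rw [mem_closedBall_zero_iff, ← dist_eq_norm]; exact hR hz ha
        simp only [G, Set.indicator_of_mem hza, edist_comm a z, edist_eq_enorm_sub, le_refl]
    _ ≤ ∫⁻ z, G (z - a) ∂μ := setLIntegral_le_lintegral _ _
    _ = ∫⁻ z in closedBall 0 R, ‖z‖ₑ ^ (-p) ∂μ := by
        rw [lintegral_sub_right_eq_self, lintegral_indicator measurableSet_closedBall]

lemma Bornology.IsBounded.exists_setLIntegral_edist_rpow_neg_mul_le [Nontrivial E] {D : Set E}
    (hD : Bornology.IsBounded D) {q r σ : ℝ} (hσ : 0 ≤ σ) (hσq : σ ≤ q) (hσr : σ ≤ r)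
    (hσd : q + r - Module.finrank ℝ E < σ) :
    ∃ C : ℝ≥0∞, C ≠ ⊤ ∧ ∀ a ∈ D, ∀ b ∈ D,
      ∫⁻ z in D, edist a z ^ (-q) * edist z b ^ (-r) ∂μ ≤ C * edist a b ^ (-σ) := by
  obtain ⟨C, hC, hCD⟩ := hD.exists_setLIntegral_edist_rpow_neg_le μ (p := q + r - σ) (by linarith)
  refine ⟨2 ^ σ * (C + C), by finiteness, fun a ha b hb ↦ ?_⟩
  calc ∫⁻ z in D, edist a z ^ (-q) * edist z b ^ (-r) ∂μ
      ≤ ∫⁻ z in D, 2 ^ σ * edist a b ^ (-σ) *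
          (edist a z ^ (-(q + r - σ)) + edist b z ^ (-(q + r - σ))) ∂μ :=
        lintegral_mono fun z ↦ edist_comm z b ▸ edist_rpow_neg_mul_le a b z hσ hσq hσr
    _ = 2 ^ σ * edist a b ^ (-σ) * (∫⁻ z in D, edist a z ^ (-(q + r - σ)) ∂μ +
          ∫⁻ z in D, edist b z ^ (-(q + r - σ)) ∂μ) := by
        rw [lintegral_const_mul _ (by fun_prop), lintegral_add_left (by fun_prop)]
    _ ≤ 2 ^ σ * edist a b ^ (-σ) * (C + C) := by gcongr <;> apply hCD <;> assumption
    _ = 2 ^ σ * (C + C) * edist a b ^ (-σ) := by ring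

lemma Bornology.IsBounded.exists_setLIntegral_setLIntegral_chainKernel_le [Nontrivial E]
    {D : Set E} (hD : Bornology.IsBounded D) {c p q e : ℝ} (hc : 0 ≤ c) (hp : 0 ≤ p)
    (hpn : p < Module.finrank ℝ E) (hq : 0 ≤ q) (hqn : q < Module.finrank ℝ E)
    (hen : -(Module.finrank ℝ E : ℝ) < e) (hsum : p + q - e < c + 2 * Module.finrank ℝ E) :
    ∃ C : ℝ≥0∞, C ≠ ⊤ ∧ ∀ x ∈ D, ∀ w ∈ D,
      ∫⁻ y in D, ∫⁻ z in D, chainKernel c p e q x w y z ∂μ ∂μ ≤ C := by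
  set n : ℝ := (Module.finrank ℝ E : ℝ)
  have hrn : e⁻ < n := by
    rcases le_total 0 e with he | he
    · rw [negPart_of_nonneg he]; exact Nat.cast_pos.2 Module.finrank_pos
    · rw [negPart_of_nonpos he]; linarith
  have hsum' : q + e⁻ - n < c + n - p := by
    rcases le_total 0 e with he | he
    · rw [negPart_of_nonneg he]; linarith
    · rw [negPart_of_nonpos he]; linarith
  set r := e⁻
  have hr : 0 ≤ r := negPart_nonneg e
  -- Integrating out `z` leaves `|y - w| ^ (-σ₁)`, then integrating out `y` leaves
  -- `|x - w| ^ (-σ₂)` with `σ₂ ≤ c`; `s` keeps `σ₁` small enough for the second step.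
  obtain ⟨s, hs0, hsc⟩ := exists_between (max_lt (by linarith : 0 < c + n - p) hsum')
  rw [max_lt_iff] at hs0
  set σ₁ := min (min r q) s
  set σ₂ := min (min p σ₁) c
  have hσ₁r : σ₁ ≤ r := (min_le_left _ _).trans (min_le_left _ _)
  have hσ₁q : σ₁ ≤ q := (min_le_left _ _).trans (min_le_right _ _)
  have hσ₁ : 0 ≤ σ₁ := le_min (le_min hr hq) hs0.1.le
  have hσ₁s : σ₁ ≤ s := min_le_right _ _
  obtain ⟨C₁, hC₁, hC₁D⟩ := hD.exists_setLIntegral_edist_rpow_neg_mul_le μ hσ₁ hσ₁r hσ₁q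
    (lt_min (lt_min (by linarith) (by linarith)) (by linarith))
  obtain ⟨C₂, hC₂, hC₂D⟩ := hD.exists_setLIntegral_edist_rpow_neg_mul_le μ (σ := σ₂)
    (le_min (le_min hp hσ₁) hc) ((min_le_left _ _).trans (min_le_left _ _))
    ((min_le_left _ _).trans (min_le_right _ _))
    (lt_min (lt_min (by linarith) (by linarith)) (by linarith))
  have hσ₂c : σ₂ ≤ c := min_le_right _ _
  set K := Metric.ediam D
  have hK : K ≠ ⊤ := Metric.isBounded_iff_ediam_ne_top.1 hD
  have hKe : K ^ e⁺ ≠ ⊤ := ENNReal.rpow_ne_top_of_nonneg (posPart_nonneg e) hK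
  have hKc : K ^ (c - σ₂) ≠ ⊤ := ENNReal.rpow_ne_top_of_nonneg (by linarith) hK
  refine ⟨K ^ e⁺ * C₁ * C₂ * K ^ (c - σ₂), by finiteness, fun x hx w hw ↦ ?_⟩
  have inner : ∀ y ∈ D, ∫⁻ z in D, edist y z ^ e * edist z w ^ (-q) ∂μ ≤
      K ^ e⁺ * C₁ * edist y w ^ (-σ₁) := fun y hy ↦
    calc ∫⁻ z in D, edist y z ^ e * edist z w ^ (-q) ∂μ
        ≤ ∫⁻ z in D, K ^ e⁺ * (edist y z ^ (-r) * edist z w ^ (-q)) ∂μ := by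
          refine setLIntegral_mono (by fun_prop) fun z hz ↦ ?_
          rw [← mul_assoc]
          exact mul_le_mul_left (ENNReal.rpow_le_rpow_posPart_mul_rpow_neg_negPart
            (Metric.edist_le_ediam_of_mem hy hz) e) _
      _ ≤ K ^ e⁺ * (C₁ * edist y w ^ (-σ₁)) := by
          rw [lintegral_const_mul' _ _ hKe]
          exact mul_le_mul_right (hC₁D y hy w hw) _
      _ = K ^ e⁺ * C₁ * edist y w ^ (-σ₁) := (mul_assoc _ _ _).symm
  calc ∫⁻ y in D, ∫⁻ z in D, chainKernel c p e q x w y z ∂μ ∂μ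
      ≤ ∫⁻ y in D, edist x w ^ c * edist x y ^ (-p) * (K ^ e⁺ * C₁ * edist y w ^ (-σ₁)) ∂μ := by
        refine setLIntegral_mono (by fun_prop) fun y hy ↦ ?_
        unfold chainKernel
        rw [lintegral_const_mul _ (by fun_prop)]
        exact mul_le_mul_right (inner y hy) _
    _ = K ^ e⁺ * C₁ * edist x w ^ c * ∫⁻ y in D, edist x y ^ (-p) * edist y w ^ (-σ₁) ∂μ := by
        rw [← lintegral_const_mul _ (by fun_prop)]
        exact lintegral_congr fun y ↦ by ring
    _ ≤ K ^ e⁺ * C₁ * edist x w ^ c * (C₂ * edist x w ^ (-σ₂)) :=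
        mul_le_mul_right (hC₂D x hx w hw) _
    _ = K ^ e⁺ * C₁ * C₂ * (edist x w ^ c * edist x w ^ (-σ₂)) := by ring
    _ ≤ K ^ e⁺ * C₁ * C₂ * K ^ (c - σ₂) := by
        refine mul_le_mul_right ?_ _
        exact (ENNReal.rpow_mul_rpow_le_rpow_add (edist_ne_top _ _) hc _).trans <|
          ENNReal.rpow_le_rpow (Metric.edist_le_ediam_of_mem hx hw) (by linarith)

end FiniteDimensional

theorem stmt18_general {d : ℕ} (hd : 2 ≤ d) {D : Set (EuclideanSpace ℝ (Fin d))}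
    (hDbdd : Bornology.IsBounded D)
    {α β γ : ℝ} (hγ0 : 0 < γ) (hγα : γ < α)
    (hαβ : α < β) (hαd : α < d) :
    ∃ C : ℝ≥0∞, C ≠ ⊤ ∧ ∀ x ∈ D, ∀ w ∈ D,
      (∫⁻ y in D, ∫⁻ z in D, ENNReal.ofReal (
        (max (min (dist x w) (dist y z) / dist x y) 1) ^ γ *
          (max (min (dist x w) (dist y z) / dist z w) 1) ^ γ *
          (dist x w ^ ((d : ℝ) - α) / (dist x y ^ ((d : ℝ) - α) * dist z w ^ ((d : ℝ) - α))) *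
          dist y z ^ (β - d - α))) ≤ C := by
  have : NeZero d := ⟨by omega⟩
  have hn : (Module.finrank ℝ (EuclideanSpace ℝ (Fin d)) : ℝ) = d := by simp
  have hc : 0 ≤ (d : ℝ) - α := by linarith
  obtain ⟨C₁, hC₁, h₁⟩ := hDbdd.exists_setLIntegral_setLIntegral_chainKernel_le volume (c := d - α)
    (p := d - α) (q := d - α) (e := β - d - α) hc (by linarith) (by linarith) (by linarith)
    (by linarith) (by linarith) (by linarith)
  obtain ⟨C₂, hC₂, h₂⟩ := hDbdd.exists_setLIntegral_setLIntegral_chainKernel_le volume (c := d - α)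
    (p := d - α + γ) (q := d - α) (e := β - d - α + γ) hc (by linarith) (by linarith)
    (by linarith) (by linarith) (by linarith) (by linarith)
  obtain ⟨C₃, hC₃, h₃⟩ := hDbdd.exists_setLIntegral_setLIntegral_chainKernel_le volume (c := d - α)
    (p := d - α) (q := d - α + γ) (e := β - d - α + γ) hc (by linarith) (by linarith)
    (by linarith) (by linarith) (by linarith) (by linarith)
  obtain ⟨C₄, hC₄, h₄⟩ := hDbdd.exists_setLIntegral_setLIntegral_chainKernel_le volume (c := d - α)
    (p := d - α + γ) (q := d - α + γ) (e := β - d - α + 2 * γ) hc (by linarith) (by linarith)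
    (by linarith) (by linarith) (by linarith) (by linarith)
  refine ⟨C₁ + C₂ + C₃ + C₄, by finiteness, fun x hx w hw ↦ ?_⟩
  refine (lintegral_mono fun y ↦ lintegral_mono fun z ↦
    ofReal_kernel_le_sum_chainKernel x w y z hc hγ0.le).trans ?_
  rw [lintegral_lintegral_add_left (by fun_prop), lintegral_lintegral_add_left (by fun_prop),
    lintegral_lintegral_add_left (by fun_prop)]
  gcongr
  exacts [h₁ x hx w hw, h₂ x hx w hw, h₃ x hx w hw, h₄ x hx w hw]

theorem stmt18 {d : ℕ} (hd : 2 ≤ d) {D : Set (EuclideanSpace ℝ (Fin d))}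
    (hDopen : IsOpen D) (hDbdd : Bornology.IsBounded D)
    {α β γ : ℝ} (hγ0 : 0 < γ) (hγα : γ < α) (hα0 : 0 < α) (hα2 : α < 2)
    (hαβ : α < β) (hαd : α < d) :
    ∃ C : ℝ≥0∞, C ≠ ⊤ ∧ ∀ x ∈ D, ∀ w ∈ D,
      (∫⁻ y in D, ∫⁻ z in D, ENNReal.ofReal (
        (max (min (dist x w) (dist y z) / dist x y) 1) ^ γ *
          (max (min (dist x w) (dist y z) / dist z w) 1) ^ γ *
          (dist x w ^ ((d : ℝ) - α) / (dist x y ^ ((d : ℝ) - α) * dist z w ^ ((d : ℝ) - α))) *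
          dist y z ^ (β - d - α))) ≤ C :=
  stmt18_general hd hDbdd hγ0 hγα hαβ hαd
end

section
/- Let d ≥ 2, let D ⊂ ℝ^d be a bounded open set, and let 0 < α < min(β, d). Then sup over x, w ∈ D of the double integral ∫_D ∫_D |x-y|^{α-d}·|z-w|^{α-d}·|y-z|^{β-2α} dy dz is finite. Moreover, for 0 < γ < α < min(β, d), sup over x, w ∈ D of ∫_D ∫_D |x-y|^{α-d}·|z-w|^{α-γ-d}·|y-z|^{β-2α+γ} dy dz is also finite. -/
open MeasureTheory
open scoped ENNReal

private lemma myPowRpow {r : ℝ} (hr : 0 ≤ r) (e : ℝ) (n : ℕ) :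
    (r ^ n) ^ e = (r ^ e) ^ n := by
  rw [← Real.rpow_natCast r n, ← Real.rpow_natCast (r ^ e) n, ← Real.rpow_mul hr,
    ← Real.rpow_mul hr, mul_comm]

private lemma myClaim1 {M : ℝ} (hM : 0 < M) (E : ℝ) {s : ℝ} (h0 : 0 ≤ s) (hsM : s ≤ M) :
    s ^ E ≤ M ^ (E - min E 0) * s ^ min E 0 := by
  rcases h0.eq_or_lt with h | h
  · subst h
    rcases eq_or_ne E 0 with hE | hE
    · subst hE; simp [Real.rpow_zero]
    · rw [Real.zero_rpow hE]
      positivity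
  · have hrw : s ^ E = s ^ (E - min E 0) * s ^ min E 0 := by
      rw [← Real.rpow_add h]; ring_nf
    rw [hrw]
    exact mul_le_mul_of_nonneg_right
      (Real.rpow_le_rpow h0 hsM (sub_nonneg.2 (min_le_left E 0)))
      (Real.rpow_nonneg h0 _)

private lemma myClaim2 {s t u v : ℝ} (hs : s ≤ 0) (ht : t ≤ 0) (hu : 0 ≤ u) (hv : 0 ≤ v) :
    u ^ s * v ^ t ≤ u ^ (s + t) + v ^ (s + t) := by
  rcases hu.eq_or_lt with h | hu0
  · subst h
    rcases eq_or_ne s 0 with hs0 | hs0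
    · subst hs0
      simp only [Real.rpow_zero, one_mul, zero_add]
      exact le_add_of_nonneg_left (Real.rpow_nonneg le_rfl _)
    · rw [Real.zero_rpow hs0, zero_mul]
      positivity
  rcases hv.eq_or_lt with h | hv0
  · subst h
    rcases eq_or_ne t 0 with ht0 | ht0
    · subst ht0
      simp only [Real.rpow_zero, mul_one, add_zero]
      exact le_add_of_nonneg_right (Real.rpow_nonneg le_rfl _)
    · rw [Real.zero_rpow ht0, mul_zero]
      positivity
  rcases le_total u v with huv | huv
  · calc u ^ s * v ^ t ≤ u ^ s * u ^ t :=
        mul_le_mul_of_nonneg_left (Real.rpow_le_rpow_of_nonpos hu0 huv ht)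
          (Real.rpow_nonneg hu0.le _)
      _ = u ^ (s + t) := (Real.rpow_add hu0 s t).symm
      _ ≤ _ := le_add_of_nonneg_right (Real.rpow_nonneg hv0.le _)
  · calc u ^ s * v ^ t ≤ v ^ s * v ^ t :=
        mul_le_mul_of_nonneg_right (Real.rpow_le_rpow_of_nonpos hv0 huv hs)
          (Real.rpow_nonneg hv0.le _)
      _ = v ^ (s + t) := (Real.rpow_add hv0 s t).symm
      _ ≤ _ := le_add_of_nonneg_left (Real.rpow_nonneg hu0.le _)

private lemma myKer (d : ℕ) (hd : 1 ≤ d) {e : ℝ} (he : -(d : ℝ) < e) {R : ℝ} (hR : 0 < R) :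
    ∃ K : ℝ≥0∞, K ≠ ⊤ ∧ ∀ p : EuclideanSpace ℝ (Fin d),
      ∫⁻ q in Metric.ball p R, ENNReal.ofReal (dist p q ^ e) ≤ K := by
  haveI : NeZero d := ⟨by omega⟩
  set V : ℝ≥0∞ := volume (Metric.ball (0 : EuclideanSpace ℝ (Fin d)) 1) with hVdef
  have hV : V ≠ ⊤ := measure_ball_lt_top.ne
  have hfin : Module.finrank ℝ (EuclideanSpace ℝ (Fin d)) = d := by simp
  rcases le_or_gt 0 e with he0 | he0
  · refine ⟨ENNReal.ofReal (R ^ e) * (ENNReal.ofReal (R ^ d) * V), ?_, fun p => ?_⟩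
    · exact ENNReal.mul_ne_top ENNReal.ofReal_ne_top
        (ENNReal.mul_ne_top ENNReal.ofReal_ne_top hV)
    · have h1 : (∫⁻ q in Metric.ball p R, ENNReal.ofReal (dist p q ^ e))
          ≤ ∫⁻ _q in Metric.ball p R, ENNReal.ofReal (R ^ e) := by
        refine setLIntegral_mono measurable_const fun q hq => ?_
        refine ENNReal.ofReal_le_ofReal (Real.rpow_le_rpow dist_nonneg ?_ he0)
        rw [dist_comm]
        exact (Metric.mem_ball.1 hq).le
      refine h1.trans ?_
      rw [setLIntegral_const, Measure.addHaar_ball volume p hR.le, hfin,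
        ← Real.rpow_natCast R d]
  · -- e < 0 : dyadic annuli
    set r : ℝ := (2 : ℝ)⁻¹ with hrdef
    have hr0 : (0 : ℝ) < r := by norm_num [hrdef]
    have hr1 : r < 1 := by norm_num [hrdef]
    have hqlt : r ^ e * r ^ d < 1 := by
      have h2 : r ^ e * r ^ d = r ^ (e + d) := by
        rw [← Real.rpow_natCast r d, ← Real.rpow_add hr0]
      rw [h2]
      exact Real.rpow_lt_one hr0.le hr1 (by linarith)
    have hq0 : (0 : ℝ) ≤ r ^ e * r ^ d :=
      mul_nonneg (Real.rpow_nonneg hr0.le _) (pow_nonneg hr0.le _)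
    set q : ℝ≥0∞ := ENNReal.ofReal (r ^ e * r ^ d) with hqdef
    have hq1 : q < 1 := by rw [hqdef]; exact ENNReal.ofReal_lt_one.2 hqlt
    set c0 : ℝ≥0∞ := ENNReal.ofReal (R ^ e * r ^ e * R ^ d) with hc0def
    refine ⟨c0 * V * (1 - q)⁻¹, ?_, fun p => ?_⟩
    · refine ENNReal.mul_ne_top (ENNReal.mul_ne_top ENNReal.ofReal_ne_top hV) ?_
      refine ENNReal.inv_ne_top.2 ?_
      rw [Ne, tsub_eq_zero_iff_le]
      exact not_le.2 hq1
    · set A : ℕ → Set (EuclideanSpace ℝ (Fin d)) := fun n =>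
        Metric.closedBall p (R * r ^ n) \ Metric.ball p (R * r ^ (n + 1)) with hAdef
      have cover : Metric.ball p R ⊆ {p} ∪ ⋃ n, A n := by
        intro x hx
        rcases eq_or_ne x p with hxp | hxp
        · exact Or.inl (by simp [hxp])
        · have hd0 : 0 < dist p x := dist_pos.2 (Ne.symm hxp)
          have hdR : dist p x < R := by
            rw [dist_comm]; exact Metric.mem_ball.1 hx
          have hex : ∃ n, R * r ^ n < dist p x := by
            obtain ⟨n, hn⟩ := exists_pow_lt_of_lt_one (div_pos hd0 hR) hr1
            have := (lt_div_iff₀ hR).1 hn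
            exact ⟨n, by linarith⟩
          have hspec : R * r ^ Nat.find hex < dist p x := Nat.find_spec hex
          have hn0 : Nat.find hex ≠ 0 := by
            intro h
            rw [h] at hspec
            simp only [pow_zero, mul_one] at hspec
            linarith
          obtain ⟨m, hm⟩ := Nat.exists_eq_succ_of_ne_zero hn0
          have hmin : ¬ R * r ^ m < dist p x := Nat.find_min hex (by omega)
          right
          refine Set.mem_iUnion.2 ⟨m, ?_, ?_⟩
          · refine Metric.mem_closedBall.2 ?_
            rw [dist_comm]
            exact not_lt.1 hmin
          · intro hball
            have h1 : dist x p < R * r ^ (m + 1) := Metric.mem_ball.1 hball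
            rw [dist_comm] at h1
            rw [hm] at hspec
            exact absurd h1 (not_lt.2 hspec.le)
      have hsingle : (∫⁻ x in ({p} : Set (EuclideanSpace ℝ (Fin d))),
          ENNReal.ofReal (dist p x ^ e)) = 0 := by
        rw [lintegral_singleton]
        rw [dist_self, Real.zero_rpow (ne_of_lt he0), ENNReal.ofReal_zero, zero_mul]
      have hterm : ∀ n, (∫⁻ x in A n, ENNReal.ofReal (dist p x ^ e)) ≤ c0 * q ^ n * V := by
        intro n
        have hrn : (0 : ℝ) < R * r ^ (n + 1) := by positivity
        have h1 : (∫⁻ x in A n, ENNReal.ofReal (dist p x ^ e))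
            ≤ ∫⁻ _x in A n, ENNReal.ofReal ((R * r ^ (n + 1)) ^ e) := by
          refine setLIntegral_mono measurable_const fun x hx => ?_
          refine ENNReal.ofReal_le_ofReal (Real.rpow_le_rpow_of_nonpos hrn ?_ he0.le)
          have h2 := hx.2
          rw [Metric.mem_ball, not_lt, dist_comm] at h2
          exact h2
        refine h1.trans ?_
        rw [setLIntegral_const]
        have hvol : volume (A n) ≤ ENNReal.ofReal ((R * r ^ n) ^ d) * V := by
          refine (measure_mono Set.diff_subset).trans ?_
          rw [Measure.addHaar_closedBall volume p (by positivity), hfin]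
        calc ENNReal.ofReal ((R * r ^ (n + 1)) ^ e) * volume (A n)
            ≤ ENNReal.ofReal ((R * r ^ (n + 1)) ^ e) * (ENNReal.ofReal ((R * r ^ n) ^ d) * V) :=
              mul_le_mul_right hvol _
          _ = c0 * q ^ n * V := by
              rw [← mul_assoc, ← ENNReal.ofReal_mul (Real.rpow_nonneg (by positivity) _)]
              congr 1
              rw [hc0def, hqdef, ← ENNReal.ofReal_pow hq0,
                ← ENNReal.ofReal_mul (by positivity)]
              congr 1
              rw [Real.mul_rpow hR.le (pow_nonneg hr0.le _), myPowRpow hr0.le e (n + 1),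
                mul_pow R (r ^ n) d]
              ring
      calc (∫⁻ x in Metric.ball p R, ENNReal.ofReal (dist p x ^ e))
          ≤ ∫⁻ x in ({p} : Set (EuclideanSpace ℝ (Fin d))) ∪ ⋃ n, A n,
              ENNReal.ofReal (dist p x ^ e) := lintegral_mono_set cover
        _ ≤ (∫⁻ x in ({p} : Set (EuclideanSpace ℝ (Fin d))), ENNReal.ofReal (dist p x ^ e))
              + ∫⁻ x in ⋃ n, A n, ENNReal.ofReal (dist p x ^ e) := lintegral_union_le _ _ _
        _ = ∫⁻ x in ⋃ n, A n, ENNReal.ofReal (dist p x ^ e) := by rw [hsingle, zero_add]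
        _ ≤ ∑' n, ∫⁻ x in A n, ENNReal.ofReal (dist p x ^ e) := lintegral_iUnion_le _ _
        _ ≤ ∑' n, c0 * q ^ n * V := ENNReal.tsum_le_tsum hterm
        _ = c0 * V * (1 - q)⁻¹ := by
            calc (∑' n, c0 * q ^ n * V) = ∑' n, c0 * V * q ^ n :=
                tsum_congr fun n => by ring
              _ = c0 * V * ∑' n, q ^ n := ENNReal.tsum_mul_left
              _ = c0 * V * (1 - q)⁻¹ := by rw [ENNReal.tsum_geometric]

private lemma myMaster (d : ℕ) (hd : 1 ≤ d) {D : Set (EuclideanSpace ℝ (Fin d))}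
    (hDbdd : Bornology.IsBounded D) {A B E : ℝ}
    (hA : -(d : ℝ) < A) (hB0 : B ≤ 0) (hBE : -(d : ℝ) < B + min E 0) :
    ∃ C : ℝ≥0∞, C ≠ ⊤ ∧ ∀ x ∈ D, ∀ w ∈ D,
      (∫⁻ y in D, ∫⁻ z in D, ENNReal.ofReal
        (dist x y ^ A * dist z w ^ B * dist y z ^ E)) ≤ C := by
  set M : ℝ := Metric.diam D + 1 with hMdef
  have hM0 : 0 < M := by
    have := Metric.diam_nonneg (s := D)
    linarith
  have hdistM : ∀ a ∈ D, ∀ b ∈ D, dist a b ≤ M := fun a ha b hb =>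
    (Metric.dist_le_diam_of_mem hDbdd ha hb).trans (by linarith)
  have hsub : ∀ a ∈ D, D ⊆ Metric.ball a M := by
    intro a ha b hb
    refine Metric.mem_ball.2 ?_
    exact (Metric.dist_le_diam_of_mem hDbdd hb ha).trans_lt (by linarith)
  set e : ℝ := min E 0 with hedef
  have hee : e ≤ 0 := min_le_right _ _
  obtain ⟨K, hKtop, hK⟩ := myKer d hd hBE hM0
  obtain ⟨K', hK'top, hK'⟩ := myKer d hd hA hM0
  have hc : ENNReal.ofReal (M ^ (E - e)) * (K + K) ≠ ⊤ :=
    ENNReal.mul_ne_top ENNReal.ofReal_ne_top (ENNReal.add_ne_top.2 ⟨hKtop, hKtop⟩)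
  refine ⟨ENNReal.ofReal (M ^ (E - e)) * (K + K) * K', ENNReal.mul_ne_top hc hK'top,
    fun x hx w hw => ?_⟩
  have inner : ∀ y ∈ D,
      (∫⁻ z in D, ENNReal.ofReal (dist x y ^ A * dist z w ^ B * dist y z ^ E))
        ≤ ENNReal.ofReal (dist x y ^ A) * (ENNReal.ofReal (M ^ (E - e)) * (K + K)) := by
    intro y hy
    have pt : ∀ z ∈ D, ENNReal.ofReal (dist x y ^ A * dist z w ^ B * dist y z ^ E)
        ≤ ENNReal.ofReal (dist x y ^ A) * (ENNReal.ofReal (M ^ (E - e)) *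
          (ENNReal.ofReal (dist z w ^ (B + e)) + ENNReal.ofReal (dist y z ^ (B + e)))) := by
      intro z hz
      have h1 : dist y z ^ E ≤ M ^ (E - e) * dist y z ^ e :=
        myClaim1 hM0 E dist_nonneg (hdistM y hy z hz)
      have h2 : dist z w ^ B * dist y z ^ e ≤ dist z w ^ (B + e) + dist y z ^ (B + e) :=
        myClaim2 hB0 hee dist_nonneg dist_nonneg
      have hmid : dist z w ^ B * dist y z ^ E
          ≤ M ^ (E - e) * (dist z w ^ (B + e) + dist y z ^ (B + e)) := by
        calc dist z w ^ B * dist y z ^ E ≤ dist z w ^ B * (M ^ (E - e) * dist y z ^ e) :=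
              mul_le_mul_of_nonneg_left h1 (Real.rpow_nonneg dist_nonneg _)
          _ = M ^ (E - e) * (dist z w ^ B * dist y z ^ e) := by ring
          _ ≤ M ^ (E - e) * (dist z w ^ (B + e) + dist y z ^ (B + e)) :=
              mul_le_mul_of_nonneg_left h2 (Real.rpow_nonneg hM0.le _)
      have hreal : dist x y ^ A * dist z w ^ B * dist y z ^ E ≤
          dist x y ^ A * (M ^ (E - e) * (dist z w ^ (B + e) + dist y z ^ (B + e))) := by
        calc dist x y ^ A * dist z w ^ B * dist y z ^ E
            = dist x y ^ A * (dist z w ^ B * dist y z ^ E) := by ring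
          _ ≤ _ := mul_le_mul_of_nonneg_left hmid (Real.rpow_nonneg dist_nonneg _)
      calc ENNReal.ofReal (dist x y ^ A * dist z w ^ B * dist y z ^ E)
          ≤ ENNReal.ofReal (dist x y ^ A *
              (M ^ (E - e) * (dist z w ^ (B + e) + dist y z ^ (B + e)))) :=
            ENNReal.ofReal_le_ofReal hreal
        _ = _ := by
            rw [ENNReal.ofReal_mul (Real.rpow_nonneg dist_nonneg _),
              ENNReal.ofReal_mul (Real.rpow_nonneg hM0.le _),
              ENNReal.ofReal_add (Real.rpow_nonneg dist_nonneg _)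
                (Real.rpow_nonneg dist_nonneg _)]
    calc (∫⁻ z in D, ENNReal.ofReal (dist x y ^ A * dist z w ^ B * dist y z ^ E))
        ≤ ∫⁻ z in D, ENNReal.ofReal (dist x y ^ A) * (ENNReal.ofReal (M ^ (E - e)) *
            (ENNReal.ofReal (dist z w ^ (B + e)) + ENNReal.ofReal (dist y z ^ (B + e)))) :=
          setLIntegral_mono (by fun_prop) pt
      _ = ENNReal.ofReal (dist x y ^ A) * (ENNReal.ofReal (M ^ (E - e)) *
            ((∫⁻ z in D, ENNReal.ofReal (dist z w ^ (B + e)))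
              + ∫⁻ z in D, ENNReal.ofReal (dist y z ^ (B + e)))) := by
          rw [lintegral_const_mul' _ _ ENNReal.ofReal_ne_top,
            lintegral_const_mul' _ _ ENNReal.ofReal_ne_top,
            lintegral_add_left (by fun_prop)]
      _ ≤ ENNReal.ofReal (dist x y ^ A) * (ENNReal.ofReal (M ^ (E - e)) * (K + K)) := by
          refine mul_le_mul_right (mul_le_mul_right (add_le_add ?_ ?_) _) _
          · refine le_trans (lintegral_mono_set (hsub w hw)) ?_
            have h3 := hK w
            simpa only [dist_comm] using h3
          · exact le_trans (lintegral_mono_set (hsub y hy)) (hK y)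
  calc (∫⁻ y in D, ∫⁻ z in D, ENNReal.ofReal (dist x y ^ A * dist z w ^ B * dist y z ^ E))
      ≤ ∫⁻ y in D, ENNReal.ofReal (dist x y ^ A) *
          (ENNReal.ofReal (M ^ (E - e)) * (K + K)) :=
        setLIntegral_mono (by fun_prop) inner
    _ = ∫⁻ y in D, (ENNReal.ofReal (M ^ (E - e)) * (K + K)) *
          ENNReal.ofReal (dist x y ^ A) := lintegral_congr fun y => mul_comm _ _
    _ = (ENNReal.ofReal (M ^ (E - e)) * (K + K)) *
          ∫⁻ y in D, ENNReal.ofReal (dist x y ^ A) := lintegral_const_mul' _ _ hc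
    _ ≤ (ENNReal.ofReal (M ^ (E - e)) * (K + K)) * K' :=
        mul_le_mul_right (le_trans (lintegral_mono_set (hsub x hx)) (hK' x)) _

theorem stmt19 {d : ℕ} (hd : 2 ≤ d) {D : Set (EuclideanSpace ℝ (Fin d))}
    (hDopen : IsOpen D) (hDbdd : Bornology.IsBounded D)
    {α β γ : ℝ} (hα0 : 0 < α) (hαβ : α < β) (hαd : α < d) (hγ0 : 0 < γ) (hγα : γ < α) :
    (∃ C : ℝ≥0∞, C ≠ ⊤ ∧ ∀ x ∈ D, ∀ w ∈ D,
      (∫⁻ y in D, ∫⁻ z in D, ENNReal.ofReal (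
        dist x y ^ (α - d) * dist z w ^ (α - d) * dist y z ^ (β - 2 * α))) ≤ C) ∧
    (∃ C : ℝ≥0∞, C ≠ ⊤ ∧ ∀ x ∈ D, ∀ w ∈ D,
      (∫⁻ y in D, ∫⁻ z in D, ENNReal.ofReal (
        dist x y ^ (α - d) * dist z w ^ (α - γ - d) * dist y z ^ (β - 2 * α + γ))) ≤ C) := by
  have hd1 : 1 ≤ d := by omega
  constructor
  · refine myMaster d hd1 hDbdd (by linarith) (by linarith) ?_
    have hmin : -α < min (β - 2 * α) 0 := lt_min (by linarith) (by linarith)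
    linarith
  · refine myMaster d hd1 hDbdd (by linarith) (by linarith) ?_
    have hmin : γ - α < min (β - 2 * α + γ) 0 := lt_min (by linarith) (by linarith)
    linarith
end
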